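/- arXiv:1209.0739 — 6 statements merged into one kernel-verified Lean document; each statement's English description precedes it below -/
import Mathlib

section
/- Let p, q be positive integers, n = p + q, and let u be a descending shuffle and v an ascending shuffle in S_n. Then u ≥ v in the Bruhat order if and only if F(u,v,i) ≥ S(u,v,i) for every i ∈ {1,…,n}. -/
/-- The rank function `r_w(i,j) = #{k ≤ i : w(k) ≤ j}` (positions and values 1-indexed). -/
def rk {n : ℕ} (w : Equiv.Perm (Fin n)) (i j : ℕ) : ℕ :=
  (Finset.univ.filter (fun k : Fin n => (k : ℕ) + 1 ≤ i ∧ (w k : ℕ) + 1 ≤ j)).card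

/-- The Bruhat order: `u ≤ v` iff `r_u(i,j) ≥ r_v(i,j)` for all `i, j`. -/
def BruhatLE {n : ℕ} (u v : Equiv.Perm (Fin n)) : Prop :=
  ∀ i j : ℕ, rk v i j ≤ rk u i j

/-- `u` is a descending shuffle of `p,…,1` and `n,…,p+1`. -/
def DescShuffle (p : ℕ) {n : ℕ} (u : Equiv.Perm (Fin n)) : Prop :=
  ∀ i j : Fin n, i < j →
    ((u i : ℕ) + 1 ≤ p ∧ (u j : ℕ) + 1 ≤ p → u j < u i) ∧
    (p < (u i : ℕ) + 1 ∧ p < (u j : ℕ) + 1 → u j < u i)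

/-- `v` is an ascending shuffle of `1,…,p` and `p+1,…,n`. -/
def AscShuffle (p : ℕ) {n : ℕ} (v : Equiv.Perm (Fin n)) : Prop :=
  ∀ i j : Fin n, i < j →
    ((v i : ℕ) + 1 ≤ p ∧ (v j : ℕ) + 1 ≤ p → v i < v j) ∧
    (p < (v i : ℕ) + 1 ∧ p < (v j : ℕ) + 1 → v i < v j)

/-- `F(u,v,i) = #{j ≤ i : u(j) > p and v(j) ≤ p}`. -/
def Fcount (p : ℕ) {n : ℕ} (u v : Equiv.Perm (Fin n)) (i : ℕ) : ℕ :=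
  (Finset.univ.filter
    (fun j : Fin n => (j : ℕ) + 1 ≤ i ∧ p < (u j : ℕ) + 1 ∧ (v j : ℕ) + 1 ≤ p)).card

/-- `S(u,v,i) = #{j ≤ i : u(j) ≤ p and v(j) > p}`. -/
def Scount (p : ℕ) {n : ℕ} (u v : Equiv.Perm (Fin n)) (i : ℕ) : ℕ :=
  (Finset.univ.filter
    (fun j : Fin n => (j : ℕ) + 1 ≤ i ∧ (u j : ℕ) + 1 ≤ p ∧ p < (v j : ℕ) + 1)).card


open Finset

/-- number of "small" values (`< p`) in the first `i` positions -/
def smc (p : ℕ) {n : ℕ} (w : Equiv.Perm (Fin n)) (i : ℕ) : ℕ :=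
  (univ.filter (fun k : Fin n => (k : ℕ) < i ∧ (w k : ℕ) < p)).card

/-- number of "large" values (`≥ p`) in the first `i` positions -/
def lgc (p : ℕ) {n : ℕ} (w : Equiv.Perm (Fin n)) (i : ℕ) : ℕ :=
  (univ.filter (fun k : Fin n => (k : ℕ) < i ∧ p ≤ (w k : ℕ))).card

lemma card_split {α : Type*} (s : Finset α) (P Q : α → Prop) [DecidablePred P] [DecidablePred Q] :
    (s.filter fun x => P x ∧ Q x).card + (s.filter fun x => P x ∧ ¬ Q x).card
      = (s.filter P).card := by
  rw [← Finset.filter_filter, ← Finset.filter_filter,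
    Finset.card_filter_add_card_filter_not]

lemma card_val_le {n : ℕ} (w : Equiv.Perm (Fin n)) (s : Finset (Fin n)) (c d : ℕ)
    (h : ∀ k ∈ s, c ≤ (w k : ℕ) ∧ (w k : ℕ) < d) : s.card ≤ d - c := by
  have := Finset.card_le_card_of_injOn (f := fun k : Fin n => (w k : ℕ)) (t := Finset.Ico c d)
    (fun k hk => Finset.mem_Ico.2 (h k hk))
    (fun a _ b _ hab => w.injective (Fin.val_injective hab))
  simpa using this

lemma count_min {n : ℕ} (w : Equiv.Perm (Fin n)) (i c d : ℕ) (A : Finset (Fin n))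
    (hd : d ≤ n)
    (hsub : ∀ k : Fin n, (k : ℕ) < i → c ≤ (w k : ℕ) → (w k : ℕ) < d → k ∈ A)
    (hAi : ∀ k ∈ A, (k : ℕ) < i)
    (hkey : ∀ k m : Fin n, k ∈ A → ¬ ((m : ℕ) < i) → c ≤ (w m : ℕ) →
      (w m : ℕ) < d → c ≤ (w k : ℕ) ∧ (w k : ℕ) < d) :
    (univ.filter (fun k : Fin n => (k : ℕ) < i ∧ c ≤ (w k : ℕ) ∧ (w k : ℕ) < d)).card
      = min A.card (d - c) := by
  classical
  set C := univ.filter (fun k : Fin n => (k : ℕ) < i ∧ c ≤ (w k : ℕ) ∧ (w k : ℕ) < d) with hCdef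
  have hCA : C ⊆ A := by
    intro k hk
    simp only [hCdef, mem_filter, mem_univ, true_and] at hk
    exact hsub k hk.1 hk.2.1 hk.2.2
  have hCcd : C.card ≤ d - c := by
    apply card_val_le w C c d
    intro k hk
    simp only [hCdef, mem_filter, mem_univ, true_and] at hk
    exact hk.2
  rcases eq_or_lt_of_le hCcd with heq | hlt
  · have h2 : C.card ≤ A.card := card_le_card hCA
    omega
  · have himg : (C.image (fun k : Fin n => (w k : ℕ))).card < (Finset.Ico c d).card := by
      calc (C.image (fun k : Fin n => (w k : ℕ))).card ≤ C.card := Finset.card_image_le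
        _ < d - c := hlt
        _ = (Finset.Ico c d).card := (Nat.card_Ico c d).symm
    have hns : ¬ (Finset.Ico c d ⊆ C.image (fun k : Fin n => (w k : ℕ))) := by
      intro h
      exact absurd (card_le_card h) (by omega)
    obtain ⟨x, hxI, hxn⟩ := Finset.not_subset.1 hns
    rw [Finset.mem_Ico] at hxI
    have hxlt : x < n := lt_of_lt_of_le hxI.2 hd
    set m : Fin n := w.symm ⟨x, hxlt⟩ with hmdef
    have hwm : (w m : ℕ) = x := by simp [hmdef]
    have hmi : ¬ ((m : ℕ) < i) := by
      intro hmlt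
      apply hxn
      rw [Finset.mem_image]
      refine ⟨m, ?_, hwm⟩
      simp only [hCdef, mem_filter, mem_univ, true_and]
      exact ⟨hmlt, by omega, by omega⟩
    have hAC : A ⊆ C := by
      intro k hk
      simp only [hCdef, mem_filter, mem_univ, true_and]
      exact ⟨hAi k hk, hkey k m hk hmi (by omega) (by omega)⟩
    have hac : A.card ≤ C.card := card_le_card hAC
    have hca : C.card ≤ A.card := card_le_card hCA
    omega

lemma rk_eq_lt {n : ℕ} (w : Equiv.Perm (Fin n)) (i j : ℕ) :
    rk w i j = (univ.filter (fun k : Fin n => (k : ℕ) < i ∧ (w k : ℕ) < j)).card := by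
  unfold rk
  exact congrArg Finset.card (Finset.filter_congr fun k _ => by omega)

lemma smc_eq_rk {n : ℕ} (p : ℕ) (w : Equiv.Perm (Fin n)) (i : ℕ) :
    smc p w i = rk w i p := (rk_eq_lt w i p).symm

lemma smc_le {n p : ℕ} (w : Equiv.Perm (Fin n)) (i : ℕ) : smc p w i ≤ p := by
  have := card_val_le w (univ.filter (fun k : Fin n => (k : ℕ) < i ∧ (w k : ℕ) < p)) 0 p
    (fun k hk => by
      simp only [mem_filter, mem_univ, true_and] at hk
      omega)
  simpa [smc] using this

lemma lgc_le {n p : ℕ} (w : Equiv.Perm (Fin n)) (i : ℕ) : lgc p w i ≤ n - p := by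
  apply card_val_le w _ p n
  intro k hk
  simp only [mem_filter, mem_univ, true_and] at hk
  exact ⟨hk.2, (w k).isLt⟩

lemma smc_add_lgc {n p : ℕ} (w : Equiv.Perm (Fin n)) (i : ℕ) :
    smc p w i + lgc p w i = (univ.filter (fun k : Fin n => (k : ℕ) < i)).card := by
  unfold smc lgc
  rw [← card_split (univ : Finset (Fin n)) (fun k : Fin n => (k : ℕ) < i)
    (fun k : Fin n => (w k : ℕ) < p)]
  congr 1
  exact congrArg Finset.card (Finset.filter_congr fun k _ => by omega)

lemma rk_desc_small {n p q : ℕ} (hn : n = p + q) {u : Equiv.Perm (Fin n)}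
    (hu : DescShuffle p u) (i j : ℕ) (hj : j ≤ p) :
    rk u i j = smc p u i - (p - j) := by
  classical
  have hC := count_min u i j p
      (univ.filter (fun k : Fin n => (k : ℕ) < i ∧ (u k : ℕ) < p)) (by omega)
      (fun k hk _ h2 => by
        simp only [mem_filter, mem_univ, true_and]
        exact ⟨hk, h2⟩)
      (fun k hk => by
        simp only [mem_filter, mem_univ, true_and] at hk
        exact hk.1)
      (fun k m hk hm hc hdd => by
        simp only [mem_filter, mem_univ, true_and] at hk
        have hkm : k < m := by rw [Fin.lt_def]; omega
        have := (hu k m hkm).1 ⟨by omega, by omega⟩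
        rw [Fin.lt_def] at this
        exact ⟨by omega, hk.2⟩)
  have hsplit : (univ.filter (fun k : Fin n => (k : ℕ) < i ∧ (u k : ℕ) < j)).card
      + (univ.filter (fun k : Fin n => (k : ℕ) < i ∧ j ≤ (u k : ℕ) ∧ (u k : ℕ) < p)).card
      = (univ.filter (fun k : Fin n => (k : ℕ) < i ∧ (u k : ℕ) < p)).card := by
    rw [← card_split (univ : Finset (Fin n)) (fun k : Fin n => (k : ℕ) < i ∧ (u k : ℕ) < p)
      (fun k : Fin n => (u k : ℕ) < j)]
    congr 1
    · exact congrArg Finset.card (Finset.filter_congr fun k _ => by omega)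
    · exact congrArg Finset.card (Finset.filter_congr fun k _ => by omega)
  have hB : rk u i j
      = (univ.filter (fun k : Fin n => (k : ℕ) < i ∧ (u k : ℕ) < j)).card := rk_eq_lt u i j
  have hA : smc p u i
      = (univ.filter (fun k : Fin n => (k : ℕ) < i ∧ (u k : ℕ) < p)).card := rfl
  omega

lemma rk_desc_large {n p q : ℕ} (hn : n = p + q) {u : Equiv.Perm (Fin n)}
    (hu : DescShuffle p u) (i j : ℕ) (hj : p ≤ j) (hjn : j ≤ n) :
    rk u i j = smc p u i + (lgc p u i - (n - j)) := by
  classical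
  have hC := count_min u i j n
      (univ.filter (fun k : Fin n => (k : ℕ) < i ∧ p ≤ (u k : ℕ))) le_rfl
      (fun k hk h1 _ => by
        simp only [mem_filter, mem_univ, true_and]
        exact ⟨hk, by omega⟩)
      (fun k hk => by
        simp only [mem_filter, mem_univ, true_and] at hk
        exact hk.1)
      (fun k m hk hm hc hdd => by
        simp only [mem_filter, mem_univ, true_and] at hk
        have hkm : k < m := by rw [Fin.lt_def]; omega
        have := (hu k m hkm).2 ⟨by omega, by omega⟩
        rw [Fin.lt_def] at this
        exact ⟨by omega, (u k).isLt⟩)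
  have hsplit : (univ.filter (fun k : Fin n => (k : ℕ) < i ∧ p ≤ (u k : ℕ) ∧ (u k : ℕ) < j)).card
      + (univ.filter (fun k : Fin n => (k : ℕ) < i ∧ j ≤ (u k : ℕ) ∧ (u k : ℕ) < n)).card
      = (univ.filter (fun k : Fin n => (k : ℕ) < i ∧ p ≤ (u k : ℕ))).card := by
    rw [← card_split (univ : Finset (Fin n)) (fun k : Fin n => (k : ℕ) < i ∧ p ≤ (u k : ℕ))
      (fun k : Fin n => (u k : ℕ) < j)]
    congr 1
    · exact congrArg Finset.card (Finset.filter_congr fun k _ => by omega)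
    · exact congrArg Finset.card (Finset.filter_congr fun k _ => by
        have := (u k).isLt; omega)
  have hrksplit : rk u i j
      = (univ.filter (fun k : Fin n => (k : ℕ) < i ∧ (u k : ℕ) < p)).card
        + (univ.filter (fun k : Fin n => (k : ℕ) < i ∧ p ≤ (u k : ℕ) ∧ (u k : ℕ) < j)).card := by
    rw [rk_eq_lt, ← card_split (univ : Finset (Fin n))
      (fun k : Fin n => (k : ℕ) < i ∧ (u k : ℕ) < j) (fun k : Fin n => (u k : ℕ) < p)]
    congr 1
    · exact congrArg Finset.card (Finset.filter_congr fun k _ => by omega)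
    · exact congrArg Finset.card (Finset.filter_congr fun k _ => by omega)
  have hA : smc p u i
      = (univ.filter (fun k : Fin n => (k : ℕ) < i ∧ (u k : ℕ) < p)).card := rfl
  have hL : lgc p u i
      = (univ.filter (fun k : Fin n => (k : ℕ) < i ∧ p ≤ (u k : ℕ))).card := rfl
  omega

lemma rk_asc_small {n p q : ℕ} (hn : n = p + q) {v : Equiv.Perm (Fin n)}
    (hv : AscShuffle p v) (i j : ℕ) (hj : j ≤ p) :
    rk v i j = min (smc p v i) j := by
  classical
  have hC := count_min v i 0 j
      (univ.filter (fun k : Fin n => (k : ℕ) < i ∧ (v k : ℕ) < p)) (by omega)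
      (fun k hk _ h2 => by
        simp only [mem_filter, mem_univ, true_and]
        exact ⟨hk, by omega⟩)
      (fun k hk => by
        simp only [mem_filter, mem_univ, true_and] at hk
        exact hk.1)
      (fun k m hk hm hc hdd => by
        simp only [mem_filter, mem_univ, true_and] at hk
        have hkm : k < m := by rw [Fin.lt_def]; omega
        have := (hv k m hkm).1 ⟨by omega, by omega⟩
        rw [Fin.lt_def] at this
        exact ⟨by omega, by omega⟩)
  have hB : rk v i j
      = (univ.filter (fun k : Fin n => (k : ℕ) < i ∧ 0 ≤ (v k : ℕ) ∧ (v k : ℕ) < j)).card := by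
    rw [rk_eq_lt]
    exact congrArg Finset.card (Finset.filter_congr fun k _ => by omega)
  have hA : smc p v i
      = (univ.filter (fun k : Fin n => (k : ℕ) < i ∧ (v k : ℕ) < p)).card := rfl
  omega

lemma rk_asc_large {n p q : ℕ} (hn : n = p + q) {v : Equiv.Perm (Fin n)}
    (hv : AscShuffle p v) (i j : ℕ) (hj : p ≤ j) (hjn : j ≤ n) :
    rk v i j = smc p v i + min (lgc p v i) (j - p) := by
  classical
  have hC := count_min v i p j
      (univ.filter (fun k : Fin n => (k : ℕ) < i ∧ p ≤ (v k : ℕ))) hjn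
      (fun k hk h1 _ => by
        simp only [mem_filter, mem_univ, true_and]
        exact ⟨hk, h1⟩)
      (fun k hk => by
        simp only [mem_filter, mem_univ, true_and] at hk
        exact hk.1)
      (fun k m hk hm hc hdd => by
        simp only [mem_filter, mem_univ, true_and] at hk
        have hkm : k < m := by rw [Fin.lt_def]; omega
        have := (hv k m hkm).2 ⟨by omega, by omega⟩
        rw [Fin.lt_def] at this
        exact ⟨hk.2, by omega⟩)
  have hrksplit : rk v i j
      = (univ.filter (fun k : Fin n => (k : ℕ) < i ∧ (v k : ℕ) < p)).card
        + (univ.filter (fun k : Fin n => (k : ℕ) < i ∧ p ≤ (v k : ℕ) ∧ (v k : ℕ) < j)).card := by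
    rw [rk_eq_lt, ← card_split (univ : Finset (Fin n))
      (fun k : Fin n => (k : ℕ) < i ∧ (v k : ℕ) < j) (fun k : Fin n => (v k : ℕ) < p)]
    congr 1
    · exact congrArg Finset.card (Finset.filter_congr fun k _ => by omega)
    · exact congrArg Finset.card (Finset.filter_congr fun k _ => by omega)
  have hA : smc p v i
      = (univ.filter (fun k : Fin n => (k : ℕ) < i ∧ (v k : ℕ) < p)).card := rfl
  have hL : lgc p v i
      = (univ.filter (fun k : Fin n => (k : ℕ) < i ∧ p ≤ (v k : ℕ))).card := rfl
  omega

lemma sf_iff {n p : ℕ} (u v : Equiv.Perm (Fin n)) (i : ℕ) :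
    Scount p u v i ≤ Fcount p u v i ↔ smc p u i ≤ smc p v i := by
  classical
  have h1 : (univ.filter (fun k : Fin n => (k : ℕ) < i ∧ (u k : ℕ) < p ∧ (v k : ℕ) < p)).card
      + Scount p u v i = smc p u i := by
    unfold Scount smc
    rw [← card_split (univ : Finset (Fin n))
      (fun k : Fin n => (k : ℕ) < i ∧ (u k : ℕ) < p) (fun k : Fin n => (v k : ℕ) < p)]
    congr 1
    · exact congrArg Finset.card (Finset.filter_congr fun k _ => by omega)
    · exact congrArg Finset.card (Finset.filter_congr fun k _ => by omega)
  have h2 : (univ.filter (fun k : Fin n => (k : ℕ) < i ∧ (u k : ℕ) < p ∧ (v k : ℕ) < p)).card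
      + Fcount p u v i = smc p v i := by
    unfold Fcount smc
    rw [← card_split (univ : Finset (Fin n))
      (fun k : Fin n => (k : ℕ) < i ∧ (v k : ℕ) < p) (fun k : Fin n => (u k : ℕ) < p)]
    congr 1
    · exact congrArg Finset.card (Finset.filter_congr fun k _ => by omega)
    · exact congrArg Finset.card (Finset.filter_congr fun k _ => by omega)
  omega

lemma smc_stable {n p : ℕ} (w : Equiv.Perm (Fin n)) (i : ℕ) (hi : n ≤ i) :
    smc p w i = smc p w n := by
  unfold smc
  exact congrArg Finset.card (Finset.filter_congr fun k _ => by
    have := k.isLt; omega)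

theorem stmt0 (p q n : ℕ) (hp : 0 < p) (hq : 0 < q) (hn : n = p + q)
    (u v : Equiv.Perm (Fin n)) (hu : DescShuffle p u) (hv : AscShuffle p v) :
    BruhatLE v u ↔ ∀ i : ℕ, 1 ≤ i → i ≤ n → Scount p u v i ≤ Fcount p u v i := by
  constructor
  · intro h i _ _
    rw [sf_iff]
    rw [smc_eq_rk, smc_eq_rk]
    exact h i p
  · intro h
    have key : ∀ i : ℕ, smc p u i ≤ smc p v i := by
      intro i
      rcases Nat.eq_zero_or_pos i with rfl | hi1
      · have hz : ∀ w : Equiv.Perm (Fin n), smc p w 0 = 0 := by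
          intro w
          unfold smc
          rw [Finset.card_eq_zero, Finset.filter_eq_empty_iff]
          intro k _
          omega
        rw [hz, hz]
      · rcases le_or_gt i n with hin | hin
        · exact (sf_iff u v i).1 (h i hi1 hin)
        · rw [smc_stable u i (by omega), smc_stable v i (by omega)]
          exact (sf_iff u v n).1 (h n (by omega) le_rfl)
    intro i j
    rcases le_or_gt j n with hjn | hjn
    · rcases le_or_gt j p with hjp | hjp
      · rw [rk_desc_small hn hu i j hjp, rk_asc_small hn hv i j hjp]
        have h1 := key i
        have h2 := smc_le (p := p) u i
        omega
      · rw [rk_desc_large hn hu i j (by omega) hjn, rk_asc_large hn hv i j (by omega) hjn]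
        have h1 := key i
        have h2 := lgc_le (p := p) u i
        have h3 := smc_add_lgc (p := p) u i
        have h4 := smc_add_lgc (p := p) v i
        omega
    · have hcut : ∀ w : Equiv.Perm (Fin n), rk w i j = rk w i n := by
        intro w
        rw [rk_eq_lt, rk_eq_lt]
        exact congrArg Finset.card (Finset.filter_congr fun k _ => by
          have := (w k).isLt; omega)
      rw [hcut u, hcut v]
      rw [rk_desc_large hn hu i n (by omega) le_rfl, rk_asc_large hn hv i n (by omega) le_rfl]
      have h1 := key i
      have h2 := lgc_le (p := p) u i
      have h3 := smc_add_lgc (p := p) u i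
      have h4 := smc_add_lgc (p := p) v i
      omega
end

section
/- Let p, q be positive integers, n = p + q, and let u be a descending shuffle in S_n. If w is any permutation of {1,…,n} with r_w(i,p) = r_u(i,p) for all i ∈ {1,…,n}, then w ≤ u in the Bruhat order. In other words, u is the unique maximal element of the set {w ∈ S_n : r_w(i,p) = r_u(i,p) for all i}. -/
open Finset

section RankFunction

variable {n : ℕ} (w : Equiv.Perm (Fin n)) (i : ℕ)

lemma card_filter_le_val_lt (j j' : ℕ) :
    #{v : Fin n | j ≤ (v : ℕ) ∧ (v : ℕ) < j'} = min j' n - j := by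
  rw [← card_map Fin.valEmbedding, ← Nat.card_Ico]
  congr 1
  ext v
  simp only [mem_map, mem_filter, mem_univ, true_and, Fin.valEmbedding_apply, mem_Ico,
    Fin.exists_iff]
  constructor
  · rintro ⟨v, hvn, hv, rfl⟩
    omega
  · intro hv
    exact ⟨v, by omega, by omega, rfl⟩

lemma card_filter_le_apply_lt (j j' : ℕ) :
    #{k | j ≤ (w k : ℕ) ∧ (w k : ℕ) < j'} = min j' n - j := by
  rw [← card_filter_le_val_lt j j']
  exact card_equiv w (by simp)

lemma rk_zero_left (j : ℕ) : rk w 0 j = 0 := by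
  simp [rk]

lemma rk_min_left (j : ℕ) : rk w (min i n) j = rk w i j := by
  unfold rk
  congr 1
  ext k
  simp only [mem_filter, mem_univ, true_and]
  omega

lemma rk_min_right (j : ℕ) : rk w i (min j n) = rk w i j := by
  unfold rk
  congr 1
  ext k
  simp only [mem_filter, mem_univ, true_and]
  omega

lemma rk_eq_card_of_le {j : ℕ} (hj : n ≤ j) : rk w i j = #{k : Fin n | (k : ℕ) + 1 ≤ i} := by
  unfold rk
  congr 1
  ext k
  simp only [mem_filter, mem_univ, true_and]
  omega

lemma rk_eq_rk_add_card {j j' : ℕ} (h : j ≤ j') :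
    rk w i j' = rk w i j + #{k : Fin n | (k : ℕ) + 1 ≤ i ∧ j ≤ (w k : ℕ) ∧ (w k : ℕ) < j'} := by
  rw [rk, rk, ← card_union_of_disjoint]
  · congr 1
    ext k
    simp only [mem_union, mem_filter, mem_univ, true_and]
    omega
  · rw [disjoint_left]
    intro k h1 h2
    simp only [mem_filter, mem_univ, true_and] at h1 h2
    omega

lemma rk_mono_right {j j' : ℕ} (h : j ≤ j') : rk w i j ≤ rk w i j' := by
  rw [rk_eq_rk_add_card w i h]
  exact Nat.le_add_right _ _

lemma rk_le_rk_add {j j' : ℕ} (h : j ≤ j') : rk w i j' ≤ rk w i j + (min j' n - j) := by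
  rw [rk_eq_rk_add_card w i h, ← card_filter_le_apply_lt w j j']
  refine Nat.add_le_add_left (card_le_card fun k hk => ?_) _
  simp only [mem_filter, mem_univ, true_and] at hk ⊢
  exact hk.2

lemma rk_eq_rk_add_of_forall {j j' : ℕ} (h : j ≤ j')
    (hfull : ∀ k : Fin n, j ≤ (w k : ℕ) → (w k : ℕ) < j' → (k : ℕ) + 1 ≤ i) :
    rk w i j' = rk w i j + (min j' n - j) := by
  rw [rk_eq_rk_add_card w i h, ← card_filter_le_apply_lt w j j']
  congr 2
  ext k
  simp only [mem_filter, mem_univ, true_and]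
  exact ⟨fun hk => hk.2, fun hk => ⟨hfull k hk.1 hk.2, hk⟩⟩

end RankFunction

namespace DescShuffle

variable {p n : ℕ} {u : Equiv.Perm (Fin n)}

lemma lt_of_apply_lt_of_lt (hu : DescShuffle p u) {a b : Fin n} (hab : u a < u b)
    (hb : (u b : ℕ) < p) : b < a := by
  rcases lt_trichotomy a b with h | rfl | h
  · have := (hu a b h).1 ⟨by omega, by omega⟩
    exact absurd hab (lt_asymm this)
  · exact absurd hab (lt_irrefl _)
  · exact h

lemma lt_of_le_of_apply_lt (hu : DescShuffle p u) {a b : Fin n} (ha : p ≤ (u a : ℕ))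
    (hab : u a < u b) : b < a := by
  rcases lt_trichotomy a b with h | rfl | h
  · have := (hu a b h).2 ⟨by omega, by omega⟩
    exact absurd hab (lt_asymm this)
  · exact absurd hab (lt_irrefl _)
  · exact h

variable (w : Equiv.Perm (Fin n)) (i : ℕ)

lemma rk_le_of_le (hu : DescShuffle p u) {j : ℕ} (hj : j ≤ p) (hrk : rk u i p ≤ rk w i p) :
    rk u i j ≤ rk w i j := by
  rcases Nat.eq_zero_or_pos (rk u i j) with h0 | hpos
  · omega
  obtain ⟨k₀, hk₀i, hk₀j⟩ := card_pos.mp hpos |>.imp fun k hk => by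
    simpa only [mem_filter, mem_univ, true_and] using hk
  have hfull : ∀ k : Fin n, j ≤ (u k : ℕ) → (u k : ℕ) < p → (k : ℕ) + 1 ≤ i := by
    intro k hjk hkp
    have : k < k₀ := hu.lt_of_apply_lt_of_lt (Fin.lt_def.2 (by omega)) hkp
    rw [Fin.lt_def] at this
    omega
  have hu_eq := rk_eq_rk_add_of_forall u i hj hfull
  have hw_le := rk_le_rk_add w i hj
  omega

lemma rk_le_of_ge (hu : DescShuffle p u) {j : ℕ} (hpj : p ≤ j) (hjn : j ≤ n)
    (hrk : rk u i p ≤ rk w i p) : rk u i j ≤ rk w i j := by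
  have hsplit := rk_eq_rk_add_card u i hpj
  rcases Nat.eq_zero_or_pos (#{k : Fin n | (k : ℕ) + 1 ≤ i ∧ p ≤ (u k : ℕ) ∧ (u k : ℕ) < j})
    with h0 | hpos
  · have := rk_mono_right w i hpj
    omega
  obtain ⟨k₀, hk₀i, hk₀p, hk₀j⟩ := card_pos.mp hpos |>.imp fun k hk => by
    simpa only [mem_filter, mem_univ, true_and] using hk
  have hfull : ∀ k : Fin n, j ≤ (u k : ℕ) → (u k : ℕ) < n → (k : ℕ) + 1 ≤ i := by
    intro k hjk _
    have : k < k₀ := hu.lt_of_le_of_apply_lt hk₀p (Fin.lt_def.2 (by omega))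
    rw [Fin.lt_def] at this
    omega
  have hu_eq := rk_eq_rk_add_of_forall u i hjn hfull
  have hw_le := rk_le_rk_add w i hjn
  rw [rk_eq_card_of_le u i le_rfl] at hu_eq
  rw [rk_eq_card_of_le w i le_rfl] at hw_le
  omega

end DescShuffle

theorem stmt3_general (p n : ℕ)
    (u : Equiv.Perm (Fin n)) (hu : DescShuffle p u)
    (w : Equiv.Perm (Fin n))
    (hw : ∀ i : ℕ, 1 ≤ i → i ≤ n → rk w i p = rk u i p) :
    BruhatLE w u := by
  have hrk : ∀ i, rk u i p = rk w i p := by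
    intro i
    rw [← rk_min_left u, ← rk_min_left w]
    rcases Nat.eq_zero_or_pos (min i n) with h0 | hpos
    · rw [h0, rk_zero_left, rk_zero_left]
    · exact (hw _ hpos (min_le_right i n)).symm
  intro i j
  rw [← rk_min_right u, ← rk_min_right w]
  rcases le_total (min j n) p with hjp | hpj
  · exact hu.rk_le_of_le w i hjp (hrk i).le
  · exact hu.rk_le_of_ge w i hpj (min_le_right j n) (hrk i).le

theorem stmt3 (p q n : ℕ) (hp : 0 < p) (hq : 0 < q) (hn : n = p + q)
    (u : Equiv.Perm (Fin n)) (hu : DescShuffle p u)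
    (w : Equiv.Perm (Fin n))
    (hw : ∀ i : ℕ, 1 ≤ i → i ≤ n → rk w i p = rk u i p) :
    BruhatLE w u :=
  stmt3_general p n u hu w hw
end

section
/- Let p, q be positive integers, n = p + q, and let u be a descending shuffle and v an ascending shuffle in S_n with u ≥ v in the Bruhat order. Then the number of openers of the pair (u,v) equals the number of closers, and the canonical matching M(u,v) is a perfect matching between the openers and the closers: every opener occurs as the first coordinate of exactly one pair of M(u,v), and every closer occurs as the second coordinate of exactly one pair. -/
/-- Position `i` is an opener for the pair `(u,v)`: `u(i) > p` and `v(i) ≤ p`. -/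
def IsOpener (p : ℕ) {n : ℕ} (u v : Equiv.Perm (Fin n)) (i : Fin n) : Prop :=
  p < (u i : ℕ) + 1 ∧ (v i : ℕ) + 1 ≤ p

/-- Position `j` is a closer for the pair `(u,v)`: `u(j) ≤ p` and `v(j) > p`. -/
def IsCloser (p : ℕ) {n : ℕ} (u v : Equiv.Perm (Fin n)) (j : Fin n) : Prop :=
  (u j : ℕ) + 1 ≤ p ∧ p < (v j : ℕ) + 1

/-- One step of the left-to-right scan constructing the canonical matching.  The state is a
pair (stack of not-yet-matched openers, most recent on top; list of matched pairs so far).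
At an opener we push it onto the stack; at a closer we match it with the top of the stack,
which is the largest unmatched opener to its left. -/
def cmStep (p : ℕ) {n : ℕ} (u v : Equiv.Perm (Fin n))
    (st : List (Fin n) × List (Fin n × Fin n)) (k : Fin n) :
    List (Fin n) × List (Fin n × Fin n) :=
  if p < (u k : ℕ) + 1 ∧ (v k : ℕ) + 1 ≤ p then
    (k :: st.1, st.2)
  else if (u k : ℕ) + 1 ≤ p ∧ p < (v k : ℕ) + 1 then
    match st.1 with
    | [] => st
    | i :: s => (s, (i, k) :: st.2)
  else st

/-- The canonical matching `M(u,v)`, obtained by scanning positions from left to right and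
matching each closer `j` with the largest opener `i < j` not already matched to an earlier
closer. -/
def canonicalMatching (p : ℕ) {n : ℕ} (u v : Equiv.Perm (Fin n)) : List (Fin n × Fin n) :=
  ((List.finRange n).foldl (cmStep p u v) ([], [])).2

instance (p : ℕ) {n : ℕ} (u v : Equiv.Perm (Fin n)) (i : Fin n) :
    Decidable (IsOpener p u v i) :=
  inferInstanceAs (Decidable (p < (u i : ℕ) + 1 ∧ (v i : ℕ) + 1 ≤ p))

instance (p : ℕ) {n : ℕ} (u v : Equiv.Perm (Fin n)) (j : Fin n) :
    Decidable (IsCloser p u v j) :=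
  inferInstanceAs (Decidable ((u j : ℕ) + 1 ≤ p ∧ p < (v j : ℕ) + 1))

/-!
Scanning positions from left to right, openers are pushed onto a stack and each closer pops the
top of it. The scan pairs off all openers and closers provided the stack is never empty when a
closer arrives and is empty at the end. Among the first `t` positions, the number of openers minus
the number of closers is `r_v(t,p) - r_u(t,p)`: it is nonnegative because `v ≤ u`, and it vanishes
at `t = n` since every permutation takes the same number of values `≤ p`.
-/

open Finset

theorem List.existsUnique_mem_of_mem_map_of_nodup {α β : Type*} {l : List α} {f : α → β}
    (hl : (l.map f).Nodup) {b : β} (hb : b ∈ l.map f) : ∃! a, a ∈ l ∧ f a = b := by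
  obtain ⟨a, ha, rfl⟩ := List.mem_map.mp hb
  exact ⟨a, ⟨ha, rfl⟩, fun a' ⟨ha', h⟩ => List.inj_on_of_nodup_map hl ha' ha h⟩

section FinRange

variable {n : ℕ}

theorem List.mem_take_finRange {t : ℕ} {k : Fin n} :
    k ∈ (List.finRange n).take t ↔ (k : ℕ) < t := by
  rw [List.mem_take_iff_getElem]
  constructor
  · rintro ⟨i, hi, rfl⟩
    simpa using (lt_min_iff.mp hi).1
  · intro hk
    exact ⟨k, lt_min hk (by simp), by simp⟩

theorem List.length_filter_take_finRange (t : ℕ) (P : Fin n → Prop) [DecidablePred P] :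
    (((List.finRange n).take t).filter (P ·)).length =
      #{k : Fin n | (k : ℕ) + 1 ≤ t ∧ P k} := by
  rw [← List.toFinset_card_of_nodup ((List.nodup_finRange n).sublist
    (List.filter_sublist.trans (List.take_sublist _ _)))]
  congr 1
  ext k
  simp only [List.mem_toFinset, List.mem_filter, List.mem_take_finRange, decide_eq_true_eq,
    Finset.mem_filter, Finset.mem_univ, true_and, Nat.succ_le_iff]

theorem List.length_filter_finRange (P : Fin n → Prop) [DecidablePred P] :
    ((List.finRange n).filter (P ·)).length = #{k : Fin n | P k} := by
  simpa [Nat.succ_le_of_lt (Fin.isLt _), List.take_of_length_le] using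
    List.length_filter_take_finRange n P

end FinRange

section Rank

variable {n : ℕ} (p : ℕ) (u v : Equiv.Perm (Fin n))

theorem card_closers_add_rk (t : ℕ) :
    #{k : Fin n | (k : ℕ) + 1 ≤ t ∧ IsCloser p u v k} + rk v t p =
      #{k : Fin n | (k : ℕ) + 1 ≤ t ∧ IsOpener p u v k} + rk u t p := by
  simp only [rk, card_filter, ← sum_add_distrib]
  refine sum_congr rfl fun k _ => ?_
  unfold IsCloser IsOpener
  split_ifs <;> omega

theorem card_closers_le_card_openers (huv : BruhatLE v u) (t : ℕ) :
    #{k : Fin n | (k : ℕ) + 1 ≤ t ∧ IsCloser p u v k} ≤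
      #{k : Fin n | (k : ℕ) + 1 ≤ t ∧ IsOpener p u v k} := by
  have := card_closers_add_rk p u v t
  have := huv t p
  omega

omit p in
theorem rk_full_eq_card (w : Equiv.Perm (Fin n)) (j : ℕ) :
    rk w n j = #{m : Fin n | (m : ℕ) + 1 ≤ j} := by
  simp only [rk, Nat.succ_le_of_lt (Fin.isLt _), true_and]
  exact card_equiv w (by simp)

theorem card_openers_eq_card_closers :
    #{k : Fin n | IsOpener p u v k} = #{k : Fin n | IsCloser p u v k} := by
  have h := card_closers_add_rk p u v n
  simp only [rk_full_eq_card, Nat.succ_le_of_lt (Fin.isLt _), true_and] at h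
  omega

end Rank

section Scan

variable {n : ℕ} (p : ℕ) (u v : Equiv.Perm (Fin n))

theorem IsCloser.not_isOpener {k : Fin n} (h : IsCloser p u v k) : ¬ IsOpener p u v k :=
  fun ho => absurd h.1 (not_le.mpr ho.1)

theorem cmStep_of_isOpener (st : List (Fin n) × List (Fin n × Fin n)) {k : Fin n}
    (h : IsOpener p u v k) : cmStep p u v st k = (k :: st.1, st.2) :=
  if_pos h

theorem cmStep_of_isCloser {S : List (Fin n)} {M : List (Fin n × Fin n)} {i k : Fin n}
    (h : IsCloser p u v k) : cmStep p u v (i :: S, M) k = (S, (i, k) :: M) :=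
  (if_neg (h.not_isOpener p u v)).trans (if_pos h)

theorem cmStep_of_not_isOpener_of_not_isCloser (st : List (Fin n) × List (Fin n × Fin n))
    {k : Fin n} (ho : ¬ IsOpener p u v k) (hc : ¬ IsCloser p u v k) : cmStep p u v st k = st :=
  (if_neg ho).trans (if_neg hc)

def ScanInvariant (O C : List (Fin n)) (st : List (Fin n) × List (Fin n × Fin n)) : Prop :=
  (st.1 ++ st.2.map Prod.fst).Perm O ∧ (st.2.map Prod.snd).Perm C

theorem ScanInvariant.cmStep {O C : List (Fin n)} {st : List (Fin n) × List (Fin n × Fin n)}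
    (h : ScanInvariant O C st) {k : Fin n} (hk : IsCloser p u v k → C.length < O.length) :
    ScanInvariant (O ++ [k].filter (IsOpener p u v ·)) (C ++ [k].filter (IsCloser p u v ·))
      (cmStep p u v st k) := by
  obtain ⟨hO, hC⟩ := h
  by_cases ho : IsOpener p u v k
  · have hc : ¬ IsCloser p u v k := fun hc => hc.not_isOpener p u v ho
    rw [cmStep_of_isOpener p u v st ho]
    simp only [List.filter_singleton, ho, hc, decide_true, decide_false, cond_true, cond_false,
      List.append_nil]
    exact ⟨(hO.cons k).trans (List.perm_append_singleton k _).symm, hC⟩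
  by_cases hc : IsCloser p u v k
  · obtain ⟨S, M⟩ := st
    obtain _ | ⟨i, S⟩ := S
    · -- the stack holds `|O| - |C|` openers, which is positive before a closer
      have := hO.length_eq
      have := hC.length_eq
      simp only [List.nil_append, List.length_map] at *
      have := hk hc
      omega
    rw [cmStep_of_isCloser p u v hc]
    simp only [List.filter_singleton, ho, hc, decide_true, decide_false, cond_true, cond_false,
      List.append_nil]
    exact ⟨List.perm_middle.trans hO, (hC.cons k).trans (List.perm_append_singleton k _).symm⟩
  rw [cmStep_of_not_isOpener_of_not_isCloser p u v st ho hc]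
  simpa [ScanInvariant, ho, hc] using And.intro hO hC

theorem scanInvariant_foldl_cmStep (L : List (Fin n))
    (hbal : ∀ P : List (Fin n), P <+: L →
      (P.filter (IsCloser p u v ·)).length ≤ (P.filter (IsOpener p u v ·)).length) :
    ScanInvariant (L.filter (IsOpener p u v ·)) (L.filter (IsCloser p u v ·))
      (L.foldl (cmStep p u v) ([], [])) := by
  induction L using List.reverseRecOn with
  | nil => exact ⟨.nil, .nil⟩
  | append_singleton L k ih =>
    rw [List.foldl_append, List.foldl_cons, List.foldl_nil, List.filter_append,
      List.filter_append]
    refine (ih fun P hP => hbal P (hP.trans (L.prefix_append [k]))).cmStep p u v fun hc => ?_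
    have h := hbal (L ++ [k]) (List.prefix_refl _)
    simp only [List.filter_append, List.length_append, List.filter_singleton,
      hc, hc.not_isOpener p u v, decide_true, decide_false, cond_true, cond_false,
      List.length_cons, List.length_nil] at h
    omega

theorem scanInvariant_canonicalMatching (huv : BruhatLE v u) :
    ScanInvariant ((List.finRange n).filter (IsOpener p u v ·))
      ((List.finRange n).filter (IsCloser p u v ·)) ([], canonicalMatching p u v) := by
  have h := scanInvariant_foldl_cmStep p u v (List.finRange n) fun P hP => by
    obtain ⟨t, rfl⟩ : ∃ t, P = (List.finRange n).take t :=
      ⟨_, List.prefix_iff_eq_take.mp hP⟩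
    simp only [List.length_filter_take_finRange]
    exact card_closers_le_card_openers p u v huv t
  have hM : canonicalMatching p u v = ((List.finRange n).foldl (cmStep p u v) ([], [])).2 := rfl
  generalize (List.finRange n).foldl (cmStep p u v) ([], []) = st at h hM
  obtain ⟨S, M⟩ := st
  have hS : S = [] := by
    have hO := h.1.length_eq
    have hC := h.2.length_eq
    simp only [List.length_append, List.length_map, List.length_filter_finRange] at hO hC
    rw [card_openers_eq_card_closers] at hO
    exact List.eq_nil_of_length_eq_zero (by omega)
  rw [hM, ← hS]
  exact h

end Scan

theorem stmt10_general (p n : ℕ) (u v : Equiv.Perm (Fin n)) (huv : BruhatLE v u) :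
    (Finset.univ.filter (fun i : Fin n => IsOpener p u v i)).card =
      (Finset.univ.filter (fun j : Fin n => IsCloser p u v j)).card ∧
    (∀ i : Fin n, IsOpener p u v i →
      ∃! pr : Fin n × Fin n, pr ∈ canonicalMatching p u v ∧ pr.1 = i) ∧
    (∀ j : Fin n, IsCloser p u v j →
      ∃! pr : Fin n × Fin n, pr ∈ canonicalMatching p u v ∧ pr.2 = j) := by
  obtain ⟨hO, hC⟩ := scanInvariant_canonicalMatching p u v huv
  have hnodup (P : Fin n → Prop) [DecidablePred P] : ((List.finRange n).filter (P ·)).Nodup :=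
    (List.nodup_finRange n).filter _
  refine ⟨card_openers_eq_card_closers p u v, fun i hi => ?_, fun j hj => ?_⟩
  · rw [List.nil_append] at hO
    exact List.existsUnique_mem_of_mem_map_of_nodup (hO.nodup_iff.mpr (hnodup _))
      (hO.mem_iff.mpr (by simpa using hi))
  · exact List.existsUnique_mem_of_mem_map_of_nodup (hC.nodup_iff.mpr (hnodup _))
      (hC.mem_iff.mpr (by simpa using hj))

theorem stmt10 (p q n : ℕ) (hp : 0 < p) (hq : 0 < q) (hn : n = p + q)
    (u v : Equiv.Perm (Fin n)) (hu : DescShuffle p u) (hv : AscShuffle p v)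
    (huv : BruhatLE v u) :
    (Finset.univ.filter (fun i : Fin n => IsOpener p u v i)).card =
      (Finset.univ.filter (fun j : Fin n => IsCloser p u v j)).card ∧
    (∀ i : Fin n, IsOpener p u v i →
      ∃! pr : Fin n × Fin n, pr ∈ canonicalMatching p u v ∧ pr.1 = i) ∧
    (∀ j : Fin n, IsCloser p u v j →
      ∃! pr : Fin n × Fin n, pr ∈ canonicalMatching p u v ∧ pr.2 = j) :=
  stmt10_general p n u v huv
end

section
/- Let p, q be positive integers, n = p + q, and let u be a descending shuffle and v an ascending shuffle in S_n with u ≥ v in the Bruhat order. Then #{(i,j) : i < j, u(i) > p, u(j) ≤ p} − #{(i,j) : i < j, v(i) > p, v(j) ≤ p} = Σ_{(i,j) ∈ M(u,v)} (j − i). -/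
/-!
Call a position `i` high for `w` when `w i > p`. Counting the pairs `i < j` with `i` high row by
row shows that `#{i < j : i high, j low} + Σ_{i high} i` only depends on the number of high
positions, which is the same for every permutation. Hence the left-hand side equals
`Σ_{v i high} i - Σ_{u i high} i`, the sum of the closers minus the sum of the openers.

For the matching, the step of the scan at position `k` changes the stack height by `s k` and
lowers `Σ_{matched (i, j)} (j - i) - Σ_{i on the stack} i` by `k * s k`, where `s k` is `1`, `-1`
or `0` at openers, closers and other positions, as long as no closer meets an empty stack. The stack height after `m` positions is
`r_v(m, p) - r_u(m, p) ≥ 0`, so this never happens, and the scan ends with an empty stack.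
-/

open Finset

theorem Fin.card_filter_lt_mem_notMem_add_choose_add_sum {n : ℕ} (S : Finset (Fin n)) :
    #{x : Fin n × Fin n | x.1 < x.2 ∧ x.1 ∈ S ∧ x.2 ∉ S} + (#S).choose 2 + ∑ i ∈ S, (i : ℕ) =
      #S * (n - 1) := by
  have hsplit : #{x : Fin n × Fin n | x.1 < x.2 ∧ x.1 ∈ S ∧ x.2 ∉ S} + #{x ∈ S ×ˢ S | x.1 < x.2} =
      #{x : Fin n × Fin n | x.1 ∈ S ∧ x.1 < x.2} := by
    conv_rhs => rw [← card_filter_add_card_filter_not (fun x : Fin n × Fin n => x.2 ∉ S)]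
    congr 2 <;> ext <;> simp <;> tauto
  have hfiber : #{x : Fin n × Fin n | x.1 ∈ S ∧ x.1 < x.2} = ∑ i ∈ S, (n - 1 - i) := by
    rw [card_filter, Fintype.sum_prod_type, ← sum_filter_of_ne (p := (· ∈ S)) fun i _ hi => ?_,
      filter_mem_eq_inter, univ_inter]
    · refine sum_congr rfl fun i hi => ?_
      simp only [hi, true_and, ← card_filter, ← Fin.card_Ioi]
      congr 1
      ext; simp
    · contrapose! hi
      simp [hi]
  have hsum : ∑ i ∈ S, (n - 1 - (i : ℕ)) + ∑ i ∈ S, (i : ℕ) = #S * (n - 1) := by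
    rw [← sum_add_distrib, sum_const_nat]
    intro i _
    have := i.isLt
    omega
  rw [← card_product_filter_lt]
  omega

theorem List.sum_map_take_finRange {M : Type*} [AddCommMonoid M] {n : ℕ} (f : Fin n → M) (m : ℕ) :
    (((List.finRange n).take m).map f).sum = ∑ i : Fin n with i.val < m, f i := by
  rw [sum_filter, Fin.sum_univ_def]
  conv_rhs => rw [← List.take_append_drop m (List.finRange n)]
  have htake : ((List.finRange n).take m).map (fun i => if i.val < m then f i else 0) =
      ((List.finRange n).take m).map f := by
    refine List.map_congr_left fun i hi => ?_
    obtain ⟨j, hj, rfl⟩ := List.mem_take_iff_getElem.1 hi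
    simp only [List.getElem_finRange]
    rw [if_pos (by simp; omega)]
  have hdrop :
      (((List.finRange n).drop m).map (fun i => if i.val < m then f i else 0)).sum = 0 := by
    refine List.sum_eq_zero fun x hx => ?_
    obtain ⟨i, hi, rfl⟩ := List.mem_map.1 hx
    obtain ⟨j, hj, rfl⟩ := List.mem_drop_iff_getElem.1 hi
    simp
  rw [List.map_append, List.sum_append, htake, hdrop, add_zero]

section

variable {n : ℕ} (p : ℕ) (u v : Equiv.Perm (Fin n))

def highPositionSum (w : Equiv.Perm (Fin n)) : ℤ :=
  ∑ i with p < (w i : ℕ) + 1, ((i : ℕ) : ℤ)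

theorem card_filter_lt_high_low_add_sum (w : Equiv.Perm (Fin n)) :
    #{ij : Fin n × Fin n | ij.1 < ij.2 ∧ p < (w ij.1 : ℕ) + 1 ∧ (w ij.2 : ℕ) + 1 ≤ p} +
        (#{x : Fin n | p < (x : ℕ) + 1}).choose 2 + ∑ i with p < (w i : ℕ) + 1, (i : ℕ) =
      #{x : Fin n | p < (x : ℕ) + 1} * (n - 1) := by
  have hcard : #{i | p < (w i : ℕ) + 1} = #{x : Fin n | p < (x : ℕ) + 1} :=
    card_equiv w (by simp)
  rw [← hcard]
  simpa using Fin.card_filter_lt_mem_notMem_add_choose_add_sum {i | p < (w i : ℕ) + 1}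

theorem card_filter_lt_high_low_sub :
    (#{ij : Fin n × Fin n | ij.1 < ij.2 ∧ p < (u ij.1 : ℕ) + 1 ∧ (u ij.2 : ℕ) + 1 ≤ p} : ℤ) -
        #{ij : Fin n × Fin n | ij.1 < ij.2 ∧ p < (v ij.1 : ℕ) + 1 ∧ (v ij.2 : ℕ) + 1 ≤ p} =
      highPositionSum p v - highPositionSum p u := by
  have hu := card_filter_lt_high_low_add_sum p u
  have hv := card_filter_lt_high_low_add_sum p v
  simp only [highPositionSum, ← Nat.cast_sum]
  omega

/-- `1` at openers, `-1` at closers, `0` elsewhere. -/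
def bracketSign (k : Fin n) : ℤ :=
  (if p < (u k : ℕ) + 1 then 1 else 0) - (if p < (v k : ℕ) + 1 then 1 else 0)

def matchingPotential (st : List (Fin n) × List (Fin n × Fin n)) : ℤ :=
  (st.2.map fun pr => ((pr.2 : ℕ) : ℤ) - ((pr.1 : ℕ) : ℤ)).sum -
    (st.1.map fun i : Fin n => ((i : ℕ) : ℤ)).sum

theorem cmStep_stack_length_and_potential (st : List (Fin n) × List (Fin n × Fin n)) (k : Fin n)
    (h : 0 ≤ (st.1.length : ℤ) + bracketSign p u v k) :
    ((cmStep p u v st k).1.length : ℤ) = st.1.length + bracketSign p u v k ∧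
      matchingPotential (cmStep p u v st k) =
        matchingPotential st - (k : ℕ) * bracketSign p u v k := by
  obtain ⟨stack, pairs⟩ := st
  by_cases hopen : p < (u k : ℕ) + 1 ∧ (v k : ℕ) + 1 ≤ p
  · have hsign : bracketSign p u v k = 1 := by simp only [bracketSign]; split_ifs <;> omega
    simp only [cmStep, if_pos hopen, hsign, matchingPotential, List.length_cons, List.map_cons,
      List.sum_cons]
    constructor <;> push_cast <;> ring
  by_cases hclose : (u k : ℕ) + 1 ≤ p ∧ p < (v k : ℕ) + 1
  · have hsign : bracketSign p u v k = -1 := by simp only [bracketSign]; split_ifs <;> omega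
    rw [hsign] at h
    obtain _ | ⟨i, stack⟩ := stack
    · simp at h
    simp only [cmStep, if_neg hopen, if_pos hclose, hsign, matchingPotential, List.length_cons,
      List.map_cons, List.sum_cons]
    constructor <;> push_cast <;> ring
  have hsign : bracketSign p u v k = 0 := by simp only [bracketSign]; split_ifs <;> omega
  rw [cmStep, if_neg hopen, if_neg hclose, hsign]
  simp

theorem foldl_cmStep_stack_length_and_potential (l : List (Fin n))
    (st : List (Fin n) × List (Fin n × Fin n))
    (h : ∀ m, 0 ≤ (st.1.length : ℤ) + ((l.take m).map (bracketSign p u v)).sum) :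
    ((l.foldl (cmStep p u v) st).1.length : ℤ) = st.1.length + (l.map (bracketSign p u v)).sum ∧
      matchingPotential (l.foldl (cmStep p u v) st) =
        matchingPotential st -
          (l.map fun k : Fin n => ((k : ℕ) : ℤ) * bracketSign p u v k).sum := by
  induction l generalizing st with
  | nil => simp
  | cons k l ih =>
    obtain ⟨hlen, hpot⟩ := cmStep_stack_length_and_potential p u v st k (by simpa using h 1)
    obtain ⟨hlen', hpot'⟩ := ih (cmStep p u v st k) fun m => by
      have := h (m + 1)
      simp only [List.take_succ_cons, List.map_cons, List.sum_cons] at this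
      rw [hlen]
      linarith
    simp only [List.foldl_cons, List.map_cons, List.sum_cons]
    constructor <;> linarith

theorem rk_eq_sum (w : Equiv.Perm (Fin n)) (m : ℕ) :
    (rk w m p : ℤ) = ∑ k : Fin n with k.val < m, if (w k : ℕ) + 1 ≤ p then 1 else 0 := by
  rw [sum_boole, filter_filter, rk]
  congr 3

theorem sum_take_finRange_bracketSign (m : ℕ) :
    (((List.finRange n).take m).map (bracketSign p u v)).sum = rk v m p - rk u m p := by
  rw [List.sum_map_take_finRange, rk_eq_sum, rk_eq_sum, ← sum_sub_distrib]
  refine sum_congr rfl fun k _ => ?_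
  simp only [bracketSign]
  split_ifs <;> omega

theorem sum_finRange_bracketSign : ((List.finRange n).map (bracketSign p u v)).sum = 0 := by
  rw [← Fin.sum_univ_def]
  simp only [bracketSign, sum_sub_distrib]
  exact sub_eq_zero.2 <| (Equiv.sum_comp u fun x : Fin n => if p < (x : ℕ) + 1 then 1 else 0).trans
    (Equiv.sum_comp v fun x : Fin n => if p < (x : ℕ) + 1 then 1 else 0).symm

theorem sum_mul_bracketSign :
    ∑ k : Fin n, ((k : ℕ) : ℤ) * bracketSign p u v k =
      highPositionSum p u - highPositionSum p v := by
  simp only [bracketSign, highPositionSum, sum_filter, mul_sub, mul_ite, mul_one, mul_zero,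
    sum_sub_distrib]

theorem sum_canonicalMatching (huv : BruhatLE v u) :
    ((canonicalMatching p u v).map fun pr => ((pr.2 : ℕ) : ℤ) - ((pr.1 : ℕ) : ℤ)).sum =
      highPositionSum p v - highPositionSum p u := by
  have hheight (m : ℕ) : 0 ≤ (((List.finRange n).take m).map (bracketSign p u v)).sum := by
    rw [sum_take_finRange_bracketSign]
    exact sub_nonneg.2 (Nat.cast_le.2 (huv m p))
  obtain ⟨hlen, hpot⟩ := foldl_cmStep_stack_length_and_potential p u v (List.finRange n) ([], [])
    fun m => by simpa using hheight m
  rw [sum_finRange_bracketSign] at hlen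
  have hstack : ((List.finRange n).foldl (cmStep p u v) ([], [])).1 = [] :=
    List.eq_nil_of_length_eq_zero (by simpa using hlen)
  rw [← Fin.sum_univ_def, sum_mul_bracketSign] at hpot
  simpa [matchingPotential, hstack, canonicalMatching] using hpot

end

theorem stmt12_general (p n : ℕ)
    (u v : Equiv.Perm (Fin n))
    (huv : BruhatLE v u) :
    ((Finset.univ.filter (fun ij : Fin n × Fin n =>
        ij.1 < ij.2 ∧ p < (u ij.1 : ℕ) + 1 ∧ (u ij.2 : ℕ) + 1 ≤ p)).card : ℤ) -
      ((Finset.univ.filter (fun ij : Fin n × Fin n =>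
        ij.1 < ij.2 ∧ p < (v ij.1 : ℕ) + 1 ∧ (v ij.2 : ℕ) + 1 ≤ p)).card : ℤ) =
    ((canonicalMatching p u v).map
      (fun pr => ((pr.2 : ℕ) : ℤ) - ((pr.1 : ℕ) : ℤ))).sum := by
  rw [card_filter_lt_high_low_sub, sum_canonicalMatching p u v huv]

theorem stmt12 (p q n : ℕ) (hp : 0 < p) (hq : 0 < q) (hn : n = p + q)
    (u v : Equiv.Perm (Fin n)) (hu : DescShuffle p u) (hv : AscShuffle p v)
    (huv : BruhatLE v u) :
    ((Finset.univ.filter (fun ij : Fin n × Fin n =>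
        ij.1 < ij.2 ∧ p < (u ij.1 : ℕ) + 1 ∧ (u ij.2 : ℕ) + 1 ≤ p)).card : ℤ) -
      ((Finset.univ.filter (fun ij : Fin n × Fin n =>
        ij.1 < ij.2 ∧ p < (v ij.1 : ℕ) + 1 ∧ (v ij.2 : ℕ) + 1 ≤ p)).card : ℤ) =
    ((canonicalMatching p u v).map
      (fun pr => ((pr.2 : ℕ) : ℤ) - ((pr.1 : ℕ) : ℤ))).sum :=
  stmt12_general p n u v huv
end

section
/- Let p, q be positive integers, n = p + q, and let u be a descending shuffle in S_n. Let F_1 ⊂ F_2 ⊂ ⋯ ⊂ F_n = ℂ^n be a complete flag. If dim(F_i ∩ E_p) = r_u(i,p) for all i ∈ {1,…,n}, then dim(F_i ∩ E_j) ≥ r_u(i,j) for all i, j ∈ {1,…,n}. (That is, any flag satisfying the p-th column rank conditions of u lies in the Schubert variety X_u.) -/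
/-- `E j`: the span of the first `j` standard basis vectors of `ℂ^n`. -/
noncomputable def stdE (n j : ℕ) : Submodule ℂ (Fin n → ℂ) :=
  Submodule.span ℂ ((fun k : Fin n => (Pi.single k 1 : Fin n → ℂ)) ''
    {k : Fin n | (k : ℕ) + 1 ≤ j})

/-!
On the geometric side, `dim (A ⊓ C) + dim B ≤ dim (A ⊓ B) + dim C` whenever `B ≤ C`. With
`A = F_i` and `(B, C) = (E_j, E_p)` this gives `dim (F_i ⊓ E_j) ≥ r_u(i,p) - (p - j)` for `j ≤ p`,
and with `(B, C) = (E_j, ℂ^n)` it gives `dim (F_i ⊓ E_j) ≥ i + j - n`.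

On the combinatorial side, a descending shuffle lists the values `≤ p` in decreasing order, and
likewise the values `> p`. So if some `k ≤ i` has `u(k) ≤ j ≤ p`, all values in `(j, p]` occur
before `k` and `r_u(i,j) + (p - j) ≤ r_u(i,p)`; if some `k ≤ i` has `p < u(k) ≤ j`, all values in
`(j, n]` occur before `k` and `r_u(i,j) + (n - j) ≤ i`. Otherwise `r_u(i,j) = 0`, resp.
`r_u(i,j) ≤ r_u(i,p) ≤ dim (F_i ⊓ E_j)`.
-/

open Module

theorem Submodule.finrank_inf_add_finrank_le_of_le {K V : Type*} [DivisionRing K]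
    [AddCommGroup V] [Module K V] [FiniteDimensional K V] (A : Submodule K V)
    {B C : Submodule K V} (hBC : B ≤ C) :
    finrank K ↥(A ⊓ C) + finrank K B ≤ finrank K ↥(A ⊓ B) + finrank K C := by
  have hsum := Submodule.finrank_sup_add_finrank_inf_eq (A ⊓ C) B
  rw [inf_assoc, inf_eq_right.mpr hBC] at hsum
  have hsup : finrank K ↥(A ⊓ C ⊔ B) ≤ finrank K C :=
    Submodule.finrank_mono (sup_le inf_le_right hBC)
  omega

theorem stdE_mono (n : ℕ) {j j' : ℕ} (h : j ≤ j') : stdE n j ≤ stdE n j' :=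
  Submodule.span_mono (Set.image_mono fun _ hk => le_trans hk h)

theorem finrank_stdE (n : ℕ) {j : ℕ} (hj : j ≤ n) : finrank ℂ (stdE n j) = j := by
  classical
  have hli : LinearIndependent ℂ
      (fun k : ({k : Fin n | (k : ℕ) + 1 ≤ j} : Set (Fin n)) =>
        (Pi.single (k : Fin n) 1 : Fin n → ℂ)) := by
    simpa [Function.comp_def] using
      (Pi.basisFun ℂ (Fin n)).linearIndependent.comp _ Subtype.val_injective
  rw [stdE, Set.image_eq_range, finrank_span_eq_card hli, Fintype.card_subtype]
  simp only [Nat.add_one_le_iff, Set.mem_ofPred_eq, Fin.card_filter_val_lt, min_eq_right hj]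

section RankFunction

variable {n : ℕ} (w : Equiv.Perm (Fin n))

theorem rk_le (i j : ℕ) : rk w i j ≤ i := by
  calc rk w i j ≤ (Finset.univ.filter fun k : Fin n => (k : ℕ) < i).card :=
        Finset.card_le_card fun k hk => by
          simp only [Finset.mem_filter, Finset.mem_univ, true_and] at hk ⊢; omega
    _ = min n i := Fin.card_filter_val_lt
    _ ≤ i := min_le_right _ _

theorem rk_mono_of_forall {i j j' : ℕ}
    (h : ∀ k : Fin n, (k : ℕ) < i → (w k : ℕ) < j → (w k : ℕ) < j') : rk w i j ≤ rk w i j' :=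
  Finset.card_le_card fun k hk => by
    simp only [Finset.mem_filter, Finset.mem_univ, true_and] at hk ⊢
    exact ⟨hk.1, h k (by omega) (by omega)⟩

theorem rk_add_le_rk {i j b : ℕ} (hjb : j ≤ b) (hbn : b ≤ n)
    (h : ∀ k : Fin n, j ≤ (w k : ℕ) → (w k : ℕ) < b → (k : ℕ) < i) :
    rk w i j + (b - j) ≤ rk w i b := by
  classical
  set low := Finset.univ.filter fun k : Fin n => (k : ℕ) + 1 ≤ i ∧ (w k : ℕ) + 1 ≤ j
  set mid := Finset.univ.filter fun k : Fin n => j ≤ (w k : ℕ) ∧ (w k : ℕ) < b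
  have hmid : b - j ≤ mid.card := by
    have hIco : Finset.Ico j b ⊆ mid.image fun k => (w k : ℕ) := fun m hm => by
      rw [Finset.mem_Ico] at hm
      refine Finset.mem_image.mpr ⟨w.symm ⟨m, by omega⟩, ?_, by simp⟩
      simpa [mid] using hm
    simpa using (Finset.card_le_card hIco).trans Finset.card_image_le
  have hdisj : Disjoint low mid := Finset.disjoint_filter.mpr fun _ _ hlow hmid => by omega
  have hsub : low ∪ mid ⊆ Finset.univ.filter
      fun k : Fin n => (k : ℕ) + 1 ≤ i ∧ (w k : ℕ) + 1 ≤ b := fun k hk => by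
    simp only [low, mid, Finset.mem_union, Finset.mem_filter, Finset.mem_univ, true_and] at hk ⊢
    rcases hk with hk | hk
    · omega
    · have := h k hk.1 hk.2; omega
  calc rk w i j + (b - j) ≤ low.card + mid.card := Nat.add_le_add_left hmid _
    _ = (low ∪ mid).card := (Finset.card_union_of_disjoint hdisj).symm
    _ ≤ rk w i b := Finset.card_le_card hsub

end RankFunction

namespace DescShuffle

variable {p n : ℕ} {u : Equiv.Perm (Fin n)}

theorem lt_of_val_lt (hu : DescShuffle p u) {k k' : Fin n}
    (hside : (u k : ℕ) < p ↔ (u k' : ℕ) < p) (hlt : u k < u k') : k' < k := by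
  rcases lt_trichotomy k' k with h | rfl | h
  · exact h
  · exact absurd hlt (lt_irrefl _)
  · have := if hk : (u k : ℕ) < p then (hu k k' h).1 ⟨by omega, by omega⟩
      else (hu k k' h).2 ⟨by omega, by omega⟩
    exact absurd hlt (not_lt.mpr this.le)

theorem rk_eq_zero_or_add_le (hu : DescShuffle p u) (hpn : p ≤ n) (i : ℕ)
    {j : ℕ} (hjp : j ≤ p) : rk u i j = 0 ∨ rk u i j + (p - j) ≤ rk u i p := by
  rcases Nat.eq_zero_or_pos (rk u i j) with h0 | hpos
  · exact Or.inl h0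
  obtain ⟨k₀, hk₀⟩ := Finset.card_pos.mp hpos
  simp only [Finset.mem_filter, Finset.mem_univ, true_and] at hk₀
  refine Or.inr (rk_add_le_rk u hjp hpn fun k hjk hkp => ?_)
  have := hu.lt_of_val_lt (k := k₀) (k' := k) (by omega) (by rw [Fin.lt_def]; omega)
  rw [Fin.lt_def] at this
  omega

theorem rk_le_or_add_le (hu : DescShuffle p u) (i : ℕ) {j : ℕ} (hjn : j ≤ n) :
    rk u i j ≤ rk u i p ∨ rk u i j + (n - j) ≤ i := by
  by_cases hlarge : ∃ k₀ : Fin n, (k₀ : ℕ) < i ∧ p ≤ (u k₀ : ℕ) ∧ (u k₀ : ℕ) < j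
  · obtain ⟨k₀, hk₀i, hpk₀, hk₀j⟩ := hlarge
    refine Or.inr ((rk_add_le_rk u hjn le_rfl fun k hjk _ => ?_).trans (rk_le u i n))
    have := hu.lt_of_val_lt (k := k₀) (k' := k) (by omega) (by rw [Fin.lt_def]; omega)
    rw [Fin.lt_def] at this
    omega
  · push Not at hlarge
    exact Or.inl (rk_mono_of_forall u fun k hki hkj => by
      by_contra hkp
      exact absurd hkj (not_lt.mpr (hlarge k hki (by omega))))

end DescShuffle

theorem stmt14_general (p q n : ℕ) (hn : n = p + q)
    (u : Equiv.Perm (Fin n)) (hu : DescShuffle p u)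
    (F : Fin n → Submodule ℂ (Fin n → ℂ))
    (hdim : ∀ i : Fin n, Module.finrank ℂ (F i) = (i : ℕ) + 1)
    (hyp : ∀ i : Fin n, Module.finrank ℂ ↥(F i ⊓ stdE n p) = rk u ((i : ℕ) + 1) p) :
    ∀ i : Fin n, ∀ j : ℕ, 1 ≤ j → j ≤ n →
      rk u ((i : ℕ) + 1) j ≤ Module.finrank ℂ ↥(F i ⊓ stdE n j) := by
  intro i j _ hjn
  have hpn : p ≤ n := by omega
  rcases le_or_gt j p with hjp | hpj
  · have hgeom := (F i).finrank_inf_add_finrank_le_of_le (stdE_mono n hjp)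
    rw [hyp i, finrank_stdE n hjn, finrank_stdE n hpn] at hgeom
    have := hu.rk_eq_zero_or_add_le hpn ((i : ℕ) + 1) hjp
    omega
  · have hgeom := (F i).finrank_inf_add_finrank_le_of_le (le_top : stdE n j ≤ ⊤)
    rw [inf_top_eq, hdim i, finrank_stdE n hjn, finrank_top, Module.finrank_fin_fun] at hgeom
    have hmono : finrank ℂ ↥(F i ⊓ stdE n p) ≤ finrank ℂ ↥(F i ⊓ stdE n j) :=
      Submodule.finrank_mono (inf_le_inf_left _ (stdE_mono n hpj.le))
    have := hu.rk_le_or_add_le ((i : ℕ) + 1) hjn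
    rw [hyp i] at hmono
    omega

theorem stmt14 (p q n : ℕ) (hp : 0 < p) (hq : 0 < q) (hn : n = p + q)
    (u : Equiv.Perm (Fin n)) (hu : DescShuffle p u)
    (F : Fin n → Submodule ℂ (Fin n → ℂ))
    (hchain : ∀ i j : Fin n, i ≤ j → F i ≤ F j)
    (hdim : ∀ i : Fin n, Module.finrank ℂ (F i) = (i : ℕ) + 1)
    (hyp : ∀ i : Fin n, Module.finrank ℂ ↥(F i ⊓ stdE n p) = rk u ((i : ℕ) + 1) p) :
    ∀ i : Fin n, ∀ j : ℕ, 1 ≤ j → j ≤ n →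
      rk u ((i : ℕ) + 1) j ≤ Module.finrank ℂ ↥(F i ⊓ stdE n j) :=
  stmt14_general p q n hn u hu F hdim hyp
end

section
/- Let p, q be positive integers, n = p + q, and let v be an ascending shuffle in S_n. Let F_1 ⊂ F_2 ⊂ ⋯ ⊂ F_n = ℂ^n be a complete flag. If dim(F_i ∩ Ẽ_q) = #{k ≤ i : v(k) > p} for all i ∈ {1,…,n}, then dim(F_i ∩ Ẽ_j) ≥ #{k ≤ i : v(k) > n − j} for all i, j ∈ {1,…,n}. (That is, any flag satisfying the q-th column rank conditions lies in the opposite Schubert variety X^v.) -/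
/-- `Ẽ j`: the span of the last `j` standard basis vectors `e_{n-j+1},…,e_n` of `ℂ^n`. -/
noncomputable def stdEtilde (n j : ℕ) : Submodule ℂ (Fin n → ℂ) :=
  Submodule.span ℂ ((fun k : Fin n => (Pi.single k 1 : Fin n → ℂ)) ''
    {k : Fin n | n - j ≤ (k : ℕ)})

/-! Since an ascending shuffle is increasing on each of the blocks `{0, …, p-1}` and
`{p, …, n-1}`, the values `v 0, …, v i` lying in either block form an initial segment of it. Hence,
with `a = #{k ≤ i | p ≤ v k}`, the count `#{k ≤ i | n - j ≤ v k}` is at most `a - (q - j)` when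
`j ≤ q`, and at most `max a (i + 1 - (n - j))` when `q ≤ j`. Dually, `dim (F_i ∩ Ẽ_j)` is at least
`a - (q - j)` when `j ≤ q`, as `Ẽ_j` has codimension `q - j` in `Ẽ_q`; when `q ≤ j` it is at least
`a` by monotonicity and at least `dim F_i + dim Ẽ_j - n = i + 1 - (n - j)`. -/

open Finset Module

theorem Submodule.finrank_inf_add_finrank_le {K V : Type*} [DivisionRing K] [AddCommGroup V]
    [Module K V] [FiniteDimensional K V] (U : Submodule K V) {W W' : Submodule K V}
    (h : W ≤ W') : finrank K ↥(U ⊓ W') + finrank K W ≤ finrank K ↥(U ⊓ W) + finrank K W' := by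
  have key := Submodule.finrank_sup_add_finrank_inf_eq (U ⊓ W') W
  rw [inf_assoc, inf_eq_right.mpr h] at key
  have := Submodule.finrank_mono (sup_le inf_le_right h : U ⊓ W' ⊔ W ≤ W')
  omega

theorem Finset.card_filter_le_add_of_Ico_subset {X : Finset ℕ} {p m : ℕ} (hpm : p ≤ m)
    (h : Ico p m ⊆ X) : #{x ∈ X | m ≤ x} + (m - p) ≤ #{x ∈ X | p ≤ x} := by
  have hdisj : Disjoint {x ∈ X | m ≤ x} (Ico p m) :=
    disjoint_left.mpr fun x hx hx' => by simp only [mem_filter, mem_Ico] at hx hx'; omega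
  rw [← Nat.card_Ico, ← card_union_of_disjoint hdisj]
  refine card_le_card fun x hx => ?_
  rcases mem_union.mp hx with hx | hx
  · exact mem_filter.mpr ⟨(mem_filter.mp hx).1, by have := (mem_filter.mp hx).2; omega⟩
  · exact mem_filter.mpr ⟨h hx, (mem_Ico.mp hx).1⟩

theorem stdEtilde_mono (n : ℕ) : Monotone (stdEtilde n) := fun _ _ h =>
  Submodule.span_mono (Set.image_mono fun _ hk => le_trans (Nat.sub_le_sub_left h n) hk)

theorem finrank_stdEtilde {n j : ℕ} (h : j ≤ n) : finrank ℂ (stdEtilde n j) = j := by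
  classical
  have hli : LinearIndependent ℂ fun k : ↥{k : Fin n | n - j ≤ (k : ℕ)} =>
      (Pi.single (k : Fin n) 1 : Fin n → ℂ) :=
    (Pi.linearIndependent_single_one (Fin n) ℂ).comp _ Subtype.coe_injective
  have hcard := card_filter_add_card_filter_not (s := univ)
    fun k : Fin n => (k : ℕ) < n - j
  rw [Fin.card_filter_val_lt, card_univ, Fintype.card_fin] at hcard
  rw [stdEtilde, Set.image_eq_range, finrank_span_eq_card hli,
    Fintype.card_subtype]
  simp only [Set.mem_ofPred_eq]
  simp only [not_lt] at hcard
  omega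

def initialValues {n : ℕ} (v : Equiv.Perm (Fin n)) (i : Fin n) : Finset ℕ :=
  (Iic i).image fun k => (v k : ℕ)

section InitialValues

variable {n : ℕ} {v : Equiv.Perm (Fin n)} {i : Fin n}

theorem card_initialValues : #(initialValues v i) = i + 1 := by
  rw [initialValues, card_image_of_injective _ fun _ _ h => v.injective (Fin.ext h),
    Fin.card_Iic]

theorem card_filter_initialValues (m : ℕ) :
    #{k : Fin n | (k : ℕ) + 1 ≤ (i : ℕ) + 1 ∧ m < (v k : ℕ) + 1} =
      #{x ∈ initialValues v i | m ≤ x} := by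
  rw [initialValues, filter_image,
    card_image_of_injective _ fun _ _ h => v.injective (Fin.ext h)]
  congr 1
  ext k
  simp only [mem_filter, mem_univ, mem_Iic, Fin.le_def, true_and]
  omega

end InitialValues

namespace AscShuffle

variable {p n : ℕ} {v : Equiv.Perm (Fin n)}

theorem symm_le (hv : AscShuffle p v) {k u : Fin n} (hu : u ≤ v k)
    (hblock : (u : ℕ) < p ↔ (v k : ℕ) < p) : v.symm u ≤ k := by
  by_contra! hlt
  have hsh := hv k (v.symm u) hlt
  rw [Equiv.apply_symm_apply] at hsh
  have : v k < u := by
    by_cases hk : (v k : ℕ) < p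
    · exact hsh.1 ⟨by omega, by omega⟩
    · exact hsh.2 ⟨by omega, by omega⟩
  exact absurd hu (not_le.mpr this)

theorem mem_initialValues (hv : AscShuffle p v) {i k : Fin n} (hk : k ≤ i) {u : ℕ}
    (hu : u ≤ v k) (hblock : u < p ↔ (v k : ℕ) < p) : u ∈ initialValues v i := by
  have hun : u < n := lt_of_le_of_lt hu (v k).isLt
  refine mem_image.mpr ⟨v.symm ⟨u, hun⟩, mem_Iic.mpr ?_, by simp⟩
  exact (hv.symm_le (u := ⟨u, hun⟩) hu hblock).trans hk

theorem card_filter_initialValues_le_sub (hv : AscShuffle p v) (i : Fin n) {m : ℕ}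
    (hpm : p ≤ m) :
    #{x ∈ initialValues v i | m ≤ x} ≤ #{x ∈ initialValues v i | p ≤ x} - (m - p) := by
  rcases eq_empty_or_nonempty {x ∈ initialValues v i | m ≤ x} with hempty | ⟨_, hx⟩
  · simp [hempty]
  obtain ⟨hx, hmx⟩ := mem_filter.mp hx
  obtain ⟨k, hk, rfl⟩ := mem_image.mp hx
  have hIco : Ico p m ⊆ initialValues v i := fun y hy => by
    rw [mem_Ico] at hy
    exact hv.mem_initialValues (mem_Iic.mp hk) (by omega) (by omega)
  have := card_filter_le_add_of_Ico_subset hpm hIco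
  omega

theorem card_filter_initialValues_le_max (hv : AscShuffle p v) (i : Fin n) (m : ℕ) :
    #{x ∈ initialValues v i | m ≤ x} ≤ max #{x ∈ initialValues v i | p ≤ x} (i + 1 - m) := by
  by_cases hmid : ∃ x ∈ initialValues v i, m ≤ x ∧ x < p
  · obtain ⟨_, hx, hmx, hxp⟩ := hmid
    obtain ⟨k, hk, rfl⟩ := mem_image.mp hx
    have hIco : Ico 0 m ⊆ initialValues v i := fun y hy => by
      rw [mem_Ico] at hy
      exact hv.mem_initialValues (mem_Iic.mp hk) (by omega) (by omega)
    have := card_filter_le_add_of_Ico_subset m.zero_le hIco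
    rw [filter_true_of_mem fun _ _ => Nat.zero_le _, card_initialValues] at this
    omega
  · push Not at hmid
    refine le_max_of_le_left (card_le_card fun x hx => ?_)
    obtain ⟨hx, hmx⟩ := mem_filter.mp hx
    exact mem_filter.mpr ⟨hx, not_lt.mp fun hxp => absurd hxp (not_lt.mpr (hmid x hx hmx))⟩

end AscShuffle

theorem stmt15_general (p q n : ℕ) (hn : n = p + q)
    (v : Equiv.Perm (Fin n)) (hv : AscShuffle p v)
    (F : Fin n → Submodule ℂ (Fin n → ℂ))
    (hdim : ∀ i : Fin n, Module.finrank ℂ (F i) = (i : ℕ) + 1)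
    (hyp : ∀ i : Fin n, Module.finrank ℂ ↥(F i ⊓ stdEtilde n q) =
      (Finset.univ.filter
        (fun k : Fin n => (k : ℕ) + 1 ≤ (i : ℕ) + 1 ∧ p < (v k : ℕ) + 1)).card) :
    ∀ i : Fin n, ∀ j : ℕ, 1 ≤ j → j ≤ n →
      (Finset.univ.filter
          (fun k : Fin n => (k : ℕ) + 1 ≤ (i : ℕ) + 1 ∧ n - j < (v k : ℕ) + 1)).card ≤
        Module.finrank ℂ ↥(F i ⊓ stdEtilde n j) := by
  intro i j _ hjn
  have hEj := finrank_stdEtilde hjn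
  simp only [card_filter_initialValues] at hyp ⊢
  rcases le_total j q with hjq | hqj
  · have hcount := hv.card_filter_initialValues_le_sub i (m := n - j) (by omega)
    have hcodim := (F i).finrank_inf_add_finrank_le (stdEtilde_mono n hjq)
    rw [finrank_stdEtilde (by omega : q ≤ n), hEj, hyp i] at hcodim
    omega
  · have hcount := hv.card_filter_initialValues_le_max i (n - j)
    have hmono : finrank ℂ ↥(F i ⊓ stdEtilde n q) ≤ finrank ℂ ↥(F i ⊓ stdEtilde n j) :=
      Submodule.finrank_mono (inf_le_inf_left _ (stdEtilde_mono n hqj))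
    have hcodim := (F i).finrank_inf_add_finrank_le (le_top : stdEtilde n j ≤ ⊤)
    rw [inf_top_eq, finrank_top, hdim i, hEj, finrank_fin_fun] at hcodim
    rw [hyp i] at hmono
    omega

theorem stmt15 (p q n : ℕ) (hp : 0 < p) (hq : 0 < q) (hn : n = p + q)
    (v : Equiv.Perm (Fin n)) (hv : AscShuffle p v)
    (F : Fin n → Submodule ℂ (Fin n → ℂ))
    (hchain : ∀ i j : Fin n, i ≤ j → F i ≤ F j)
    (hdim : ∀ i : Fin n, Module.finrank ℂ (F i) = (i : ℕ) + 1)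
    (hyp : ∀ i : Fin n, Module.finrank ℂ ↥(F i ⊓ stdEtilde n q) =
      (Finset.univ.filter
        (fun k : Fin n => (k : ℕ) + 1 ≤ (i : ℕ) + 1 ∧ p < (v k : ℕ) + 1)).card) :
    ∀ i : Fin n, ∀ j : ℕ, 1 ≤ j → j ≤ n →
      (Finset.univ.filter
          (fun k : Fin n => (k : ℕ) + 1 ≤ (i : ℕ) + 1 ∧ n - j < (v k : ℕ) + 1)).card ≤
        Module.finrank ℂ ↥(F i ⊓ stdEtilde n j) :=
  stmt15_general p q n hn v hv F hdim hyp
end
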